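/- For y ∈ (0,3), let T₁ = 9 − y², T₂ = ((18−2y)/(9−y²))·∫₀^{3−y}(9 − y² − 2yz − z²)dz, T₃ = ∫₀^{3−y}(−18 + 2y + 2z)dz. Then T₁ + T₂ + T₃ = −4(y−3)²·y/(3(y+3)). -/
import Mathlib


open intervalIntegral

lemma int1 (y : ℝ) :
    (∫ z in (0:ℝ)..(3 - y), (9 - y ^ 2 - 2 * y * z - z ^ 2)) =
      (9 - y ^ 2) * (3 - y) - y * (3 - y) ^ 2 - (3 - y) ^ 3 / 3 := by
  have h1 : IntervalIntegrable (fun z : ℝ => 9 - y ^ 2 + -(2 * y) * z) MeasureTheory.volume 0 (3 - y) :=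
    intervalIntegrable_const.add ((intervalIntegral.intervalIntegrable_id).const_mul _)
  have h2 : IntervalIntegrable (fun z : ℝ => (-1 : ℝ) * z ^ 2) MeasureTheory.volume 0 (3 - y) :=
    (intervalIntegrable_pow 2).const_mul _
  have : (∫ z in (0:ℝ)..(3 - y), (9 - y ^ 2 - 2 * y * z - z ^ 2)) =
      (∫ z in (0:ℝ)..(3 - y), ((9 - y ^ 2) + -(2*y) * z + (-1) * z ^ 2)) := by
    congr 1; ext z; ring
  rw [this,
    intervalIntegral.integral_add h1 h2,
    intervalIntegral.integral_add intervalIntegrable_const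
      ((intervalIntegral.intervalIntegrable_id).const_mul _),
    intervalIntegral.integral_const, intervalIntegral.integral_const_mul,
    intervalIntegral.integral_const_mul, integral_id, integral_pow,
    smul_eq_mul]
  push_cast; ring

lemma int2 (y : ℝ) :
    (∫ z in (0:ℝ)..(3 - y), (-18 + 2 * y + 2 * z)) =
      (-18 + 2 * y) * (3 - y) + (3 - y) ^ 2 := by
  rw [show (fun z : ℝ => -18 + 2 * y + 2 * z) = fun z : ℝ => (-18 + 2 * y) + 2 * z from rfl,
    intervalIntegral.integral_add intervalIntegrable_const
      ((intervalIntegral.intervalIntegrable_id).const_mul _),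
    intervalIntegral.integral_const, intervalIntegral.integral_const_mul, integral_id,
    smul_eq_mul]
  ring

/-- The closed-form algebraic identity from Section 4.2:
`T₁ + T₂ + T₃ = −4(y−3)²y/(3(y+3))`. -/
theorem stmt_15 (y : ℝ) (hy0 : 0 < y) (hy3 : y < 3) :
    (9 - y ^ 2) +
      ((18 - 2 * y) / (9 - y ^ 2)) *
        (∫ z in (0:ℝ)..(3 - y), (9 - y ^ 2 - 2 * y * z - z ^ 2)) +
      (∫ z in (0:ℝ)..(3 - y), (-18 + 2 * y + 2 * z)) =
      -4 * (y - 3) ^ 2 * y / (3 * (y + 3)) := by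
  rw [int1, int2]
  have h1 : (9 - y ^ 2) ≠ 0 := by nlinarith
  have h2 : y + 3 ≠ 0 := by linarith
  field_simp
  ring
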